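/- arXiv:2409.03875 — 2 statements merged into one kernel-verified Lean document; each statement's English description precedes it below -/
import Mathlib

section
/- Let H be a real inner product space, K a complete submodule of H with orthogonal projection P onto K, S a nonempty subset of H, F : H → ℝ, and λ > 0. Define the penalized criterion ℒ(x) = F(x) − λ‖x − P x‖². Suppose (μ_t)_{t∈ℕ} is a sequence in S such that for every t, μ_{t+1} maximizes ν ↦ F(ν) − λ‖ν − P μ_t‖² over S, i.e., μ_{t+1} ∈ S and F(ν) − λ‖ν − P μ_t‖² ≤ F(μ_{t+1}) − λ‖μ_{t+1} − P μ_t‖² for all ν ∈ S. Then the sequence t ↦ ℒ(μ_t) is monotone non-decreasing; moreover, if F is bounded above on S, then ℒ(μ_t) converges to a real limit. -/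
/-! The iteration is block-coordinate ascent on `Φ(ν, p) = F ν - λ‖ν - p‖²`, alternately in
`ν ∈ S` and in `p ∈ K`. Since `P x` is the point of `K` nearest to `x`, the best `p` for a
given `ν` is `P ν`, and `ℒ(ν) = Φ(ν, P ν)`. Hence
`ℒ(μₜ) = Φ(μₜ, P μₜ) ≤ Φ(μₜ₊₁, P μₜ) ≤ Φ(μₜ₊₁, P μₜ₊₁) = ℒ(μₜ₊₁)`.
As `ℒ ≤ F`, a bound on `F` over `S` bounds this non-decreasing sequence, which therefore
converges. -/

namespace Submodule

variable {𝕜 E : Type*} [RCLike 𝕜] [NormedAddCommGroup E] [InnerProductSpace 𝕜 E]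
  {U : Submodule 𝕜 E} [U.HasOrthogonalProjection]

theorem norm_sub_orthogonalProjectionOnto_le (y : E) {v : E} (hv : v ∈ U) :
    ‖y - (U.orthogonalProjectionOnto y : E)‖ ≤ ‖y - v‖ := by
  rw [← starProjection_apply, starProjection_minimal]
  exact ciInf_le ⟨0, Set.forall_mem_range.2 fun _ => norm_nonneg _⟩ (⟨v, hv⟩ : U)

end Submodule

theorem monotone_of_alternating_ascent {X Y : Type*} (Φ : X → Y → ℝ) (y : X → Y) (x : ℕ → X)
    (hy : ∀ a b, Φ a (y b) ≤ Φ a (y a)) (hx : ∀ t, Φ (x t) (y (x t)) ≤ Φ (x (t + 1)) (y (x t))) :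
    Monotone fun t => Φ (x t) (y (x t)) :=
  monotone_nat_of_le_succ fun t => (hx t).trans (hy _ _)

theorem sub_mul_norm_sub_orthogonalProjectionOnto_sq_le
    {E : Type*} [NormedAddCommGroup E] [InnerProductSpace ℝ E] (U : Submodule ℝ E)
    [U.HasOrthogonalProjection] (F : E → ℝ) {lam : ℝ} (hlam : 0 ≤ lam) (a : E) {p : E}
    (hp : p ∈ U) :
    F a - lam * ‖a - p‖ ^ 2 ≤ F a - lam * ‖a - (U.orthogonalProjectionOnto a : E)‖ ^ 2 := by
  have hnorm := U.norm_sub_orthogonalProjectionOnto_le a hp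
  gcongr

theorem information_relaxation_monotone_converges_general
    {H : Type*} [NormedAddCommGroup H] [InnerProductSpace ℝ H]
    (K : Submodule ℝ H) [CompleteSpace K]
    (S : Set H) (F : H → ℝ) (lam : ℝ) (hlam : 0 < lam)
    (μ : ℕ → H) (hμS : ∀ t, μ t ∈ S)
    (hmax : ∀ t, ∀ ν ∈ S,
      F ν - lam * ‖ν - (Submodule.orthogonalProjectionOnto K (μ t) : H)‖ ^ 2 ≤
        F (μ (t + 1)) - lam * ‖μ (t + 1) - (Submodule.orthogonalProjectionOnto K (μ t) : H)‖ ^ 2) :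
    Monotone (fun t => F (μ t) - lam * ‖μ t - (Submodule.orthogonalProjectionOnto K (μ t) : H)‖ ^ 2) ∧
      (BddAbove (F '' S) →
        ∃ l : ℝ,
          Filter.Tendsto
            (fun t => F (μ t) - lam * ‖μ t - (Submodule.orthogonalProjectionOnto K (μ t) : H)‖ ^ 2)
            Filter.atTop (nhds l)) := by
  have hmono := monotone_of_alternating_ascent (fun ν p => F ν - lam * ‖ν - p‖ ^ 2)
    (fun x => (K.orthogonalProjectionOnto x : H)) μ
    (fun a b => sub_mul_norm_sub_orthogonalProjectionOnto_sq_le K F hlam.le a (Subtype.prop _))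
    (fun t => hmax t (μ t) (hμS t))
  refine ⟨hmono, fun ⟨M, hM⟩ => ⟨_, tendsto_atTop_ciSup hmono ⟨M, ?_⟩⟩⟩
  rintro _ ⟨t, rfl⟩
  have hFM : F (μ t) ≤ M := hM ⟨μ t, hμS t, rfl⟩
  have hpen : 0 ≤ lam * ‖μ t - (K.orthogonalProjectionOnto (μ t) : H)‖ ^ 2 := by positivity
  exact (sub_le_self _ hpen).trans hFM

/-- Resolution by Information Relaxation: if each iterate `μ (t+1)` maximizes the
proximal criterion `ν ↦ F ν - λ‖ν - P (μ t)‖²` over `S`, then the penalized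
criterion `ℒ(x) = F x - λ‖x - P x‖²` is non-decreasing along the iterates, and if
`F` is bounded above on `S` then `ℒ(μ t)` converges to a real limit. -/
theorem information_relaxation_monotone_converges
    {H : Type*} [NormedAddCommGroup H] [InnerProductSpace ℝ H]
    (K : Submodule ℝ H) [CompleteSpace K]
    (S : Set H) (hS : S.Nonempty) (F : H → ℝ) (lam : ℝ) (hlam : 0 < lam)
    (μ : ℕ → H) (hμS : ∀ t, μ t ∈ S)
    (hmax : ∀ t, ∀ ν ∈ S,
      F ν - lam * ‖ν - (Submodule.orthogonalProjectionOnto K (μ t) : H)‖ ^ 2 ≤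
        F (μ (t + 1)) - lam * ‖μ (t + 1) - (Submodule.orthogonalProjectionOnto K (μ t) : H)‖ ^ 2) :
    Monotone (fun t => F (μ t) - lam * ‖μ t - (Submodule.orthogonalProjectionOnto K (μ t) : H)‖ ^ 2) ∧
      (BddAbove (F '' S) →
        ∃ l : ℝ,
          Filter.Tendsto
            (fun t => F (μ t) - lam * ‖μ t - (Submodule.orthogonalProjectionOnto K (μ t) : H)‖ ^ 2)
            Filter.atTop (nhds l)) :=
  information_relaxation_monotone_converges_general K S F lam hlam μ hμS hmax
end

section
/- Let Ω be a type and L ≥ 1, W ≥ 1 integers. Suppose that for each i ∈ Fin L, d_i : Ω × (Fin L → Fin W) → Fin W is prefix-measurable at stage i, i.e., d_i(ω,a) = d_i(ω,a') whenever a_j = a'_j for all j < i. Then for every ω ∈ Ω there exists a unique a : Fin L → Fin W such that a_i = d_i(ω, a) for every i ∈ Fin L. -/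
def buildPlay {Ω : Type*} {L W : ℕ} (hW : 0 < W)
    (d : Fin L → Ω × (Fin L → Fin W) → Fin W) (ω : Ω) : Fin L → Fin W
  | i => d i (ω, fun j => if h : j < i then buildPlay hW d ω j else ⟨0, hW⟩)
termination_by i => i.val
decreasing_by exact h

/-- Well-posedness of games in product form: given a deterministic,
prefix-measurable policy profile `d` and a realization `ω` of Nature's move,
there is a unique play `a` of the game satisfying `a i = d i (ω, a)` for all
stages `i`. -/
theorem unique_play_of_prefix_measurable {Ω : Type*} (L W : ℕ)
    (hL : 1 ≤ L) (hW : 1 ≤ W)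
    (d : Fin L → Ω × (Fin L → Fin W) → Fin W)
    (hmeas : ∀ i : Fin L, ∀ ω : Ω, ∀ a a' : Fin L → Fin W,
      (∀ j : Fin L, j < i → a j = a' j) → d i (ω, a) = d i (ω, a'))
    (ω : Ω) :
    ∃! a : Fin L → Fin W, ∀ i : Fin L, a i = d i (ω, a) := by
  refine ⟨buildPlay hW d ω, ?_, ?_⟩
  · intro i
    rw [buildPlay]
    exact hmeas i ω _ _ (fun j hj => by simp [dif_pos hj])
  · intro a ha
    have key : ∀ n : ℕ, ∀ i : Fin L, i.val = n → a i = buildPlay hW d ω i := by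
      intro n
      induction n using Nat.strong_induction_on with
      | _ n IH =>
        intro i hi
        rw [ha i, buildPlay]
        refine (hmeas i ω _ _ fun j hj => ?_).symm
        rw [dif_pos hj]
        exact (IH j.val (hi ▸ hj) j rfl).symm
    funext i
    exact key i.val i rfl
end
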